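/- Let b_i = c_i (the i-th Catalan number) for all positive integers i. Then for every positive integer n, C^b(n) = binom(2n-1, n). -/

import Mathlib

open Finset

/-- The number of generalized compositions of `n` with `k` parts, where the part `i`
comes in `b i` types: the sum over all `k`-tuples of positive integers summing to `n`
of the product of the `b`-values of the parts. -/
def genComp (b : ℕ → ℕ) (n k : ℕ) : ℕ :=
  ∑ f ∈ (Finset.Nat.antidiagonalTuple k n).filter (fun f => ∀ j, 0 < f j),
    ∏ j, b (f j)

/-- The total number of generalized compositions of `n` (with any number of parts). -/
def genCompAll (b : ℕ → ℕ) (n : ℕ) : ℕ :=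
  ∑ k ∈ Finset.range (n + 1), genComp b n k

/-!
Splitting off the first part of a composition gives
`genCompAll b (n + 1) = ∑_{i + j = n} b (i + 1) * genCompAll b j`, so it suffices that
`a m = (2m - 1).choose m` satisfies the same recursion with `b = catalan`. That recursion comes
from the convolution `∑_{i + j = n} c_i * (2j + r).choose j = (2n + r + 1).choose n`, i.e. the
identity `C(x) * C(x)^r / √(1 - 4x) = C(x)^(r+1) / √(1 - 4x)` for the Catalan series `C`. It is
proved by induction on `n` and `r` from Pascal's rule, with the ballot formula
`c_{n+1} = (2n + 2).choose (n + 1) - (2n + 2).choose n` handling `r = 0`.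
-/

section
variable (b : ℕ → ℕ)

theorem genComp_zero_zero : genComp b 0 0 = 1 := by
  simp [genComp]

theorem genComp_succ_zero (n : ℕ) : genComp b (n + 1) 0 = 0 := by
  simp [genComp]

theorem genComp_eq_zero_of_lt {n k : ℕ} (h : n < k) : genComp b n k = 0 := by
  refine sum_eq_zero fun f hf => absurd h (not_lt.2 ?_)
  rw [mem_filter, Nat.mem_antidiagonalTuple] at hf
  calc k = ∑ _j : Fin k, 1 := by simp
    _ ≤ ∑ j, f j := sum_le_sum fun j _ => hf.2 j
    _ = n := hf.1

theorem genComp_succ_succ (n k : ℕ) :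
    genComp b (n + 1) (k + 1) = ∑ p ∈ antidiagonal n, b (p.1 + 1) * genComp b p.2 k := by
  simp only [genComp, mul_sum]
  rw [sum_sigma']
  refine sum_nbij' (fun f => ⟨(f 0 - 1, n + 1 - f 0), Fin.tail f⟩)
    (fun q => Fin.cons (q.1.1 + 1) q.2) ?_ ?_ ?_ ?_ ?_
  · intro f hf
    simp only [mem_filter, Nat.mem_antidiagonalTuple, Fin.sum_univ_succ] at hf
    simp only [mem_sigma, HasAntidiagonal.mem_antidiagonal, mem_filter,
      Nat.mem_antidiagonalTuple, Fin.tail]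
    have := hf.2 0
    exact ⟨by omega, by omega, fun j => hf.2 j.succ⟩
  · rintro ⟨p, g⟩ hq
    simp only [mem_sigma, HasAntidiagonal.mem_antidiagonal, mem_filter,
      Nat.mem_antidiagonalTuple] at hq
    simp only [mem_filter, Nat.mem_antidiagonalTuple, Fin.sum_cons]
    refine ⟨by omega, Fin.cases (Nat.succ_pos _) hq.2.2⟩
  · intro f hf
    simp only [mem_filter] at hf
    simp [Nat.sub_add_cancel (hf.2 0)]
  · rintro ⟨p, g⟩ hq
    simp only [mem_sigma, HasAntidiagonal.mem_antidiagonal] at hq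
    simp only [Fin.cons_zero, Fin.tail_cons, add_tsub_cancel_right, Sigma.mk.injEq, heq_eq_eq,
      and_true]
    exact Prod.ext rfl (by dsimp only; omega)
  · intro f hf
    simp only [mem_filter] at hf
    rw [Fin.prod_univ_succ, Nat.sub_add_cancel (hf.2 0)]
    rfl

theorem genCompAll_zero : genCompAll b 0 = 1 := by
  simp [genCompAll, genComp_zero_zero]

theorem genCompAll_eq_sum_range {n N : ℕ} (h : n < N) :
    genCompAll b n = ∑ k ∈ range N, genComp b n k :=
  sum_subset (range_subset_range.2 h) fun k _ hk =>
    genComp_eq_zero_of_lt b (by simpa using hk)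

theorem genCompAll_succ (n : ℕ) :
    genCompAll b (n + 1) = ∑ p ∈ antidiagonal n, b (p.1 + 1) * genCompAll b p.2 := by
  rw [genCompAll, sum_range_succ', genComp_succ_zero, add_zero]
  simp only [genComp_succ_succ]
  rw [sum_comm]
  refine sum_congr rfl fun p hp => ?_
  have hp : p.1 + p.2 = n := HasAntidiagonal.mem_antidiagonal.1 hp
  rw [← mul_sum, genCompAll_eq_sum_range b (by omega : p.2 < n + 1)]
end

theorem catalan_succ_add_choose (n : ℕ) :
    catalan (n + 1) + (2 * n + 2).choose n = (2 * n + 2).choose (n + 1) := by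
  have hcat : (n + 2) * catalan (n + 1) = (2 * n + 2).choose (n + 1) :=
    succ_mul_catalan_eq_centralBinom (n + 1)
  have hratio : (2 * n + 2).choose (n + 1) * (n + 1) = (2 * n + 2).choose n * (n + 2) := by
    simpa [show 2 * n + 2 - n = n + 2 by omega] using Nat.choose_succ_right_eq (2 * n + 2) n
  refine Nat.eq_of_mul_eq_mul_left (Nat.succ_pos (n + 1)) ?_
  linarith

theorem choose_two_mul_add_two_succ (n : ℕ) :
    (2 * n + 2).choose (n + 1) = 2 * (2 * n + 1).choose n := by
  rw [Nat.choose_succ_succ', Nat.choose_symm_half]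
  ring

theorem catalan_succ_succ_add_choose (n : ℕ) :
    catalan (n + 2) + (2 * n + 3).choose n = (2 * n + 3).choose (n + 1) := by
  have h : catalan (n + 2) + (2 * n + 4).choose (n + 1) = (2 * n + 4).choose (n + 2) :=
    catalan_succ_add_choose (n + 1)
  have hlow : (2 * n + 4).choose (n + 1) = (2 * n + 3).choose n + (2 * n + 3).choose (n + 1) :=
    Nat.choose_succ_succ' _ _
  have hhigh : (2 * n + 4).choose (n + 2) = 2 * (2 * n + 3).choose (n + 1) :=
    choose_two_mul_add_two_succ (n + 1)
  omega

theorem sum_antidiagonal_catalan_mul_choose (n r : ℕ) :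
    ∑ p ∈ antidiagonal n, catalan p.1 * (2 * p.2 + r).choose p.2 =
      (2 * n + r + 1).choose n := by
  induction n generalizing r with
  | zero => simp
  | succ n ih =>
    have hpeel (s : ℕ) : ∑ p ∈ antidiagonal (n + 1), catalan p.1 * (2 * p.2 + s).choose p.2
        = catalan (n + 1) +
            ∑ p ∈ antidiagonal n, catalan p.1 * (2 * p.2 + 2 + s).choose (p.2 + 1) := by
      rw [Nat.sum_antidiagonal_succ']
      simp [mul_add, add_assoc]
    induction r with
    | zero =>
      calc ∑ p ∈ antidiagonal (n + 1), catalan p.1 * (2 * p.2 + 0).choose p.2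
          = catalan (n + 1) +
              2 * ∑ p ∈ antidiagonal n, catalan p.1 * (2 * p.2 + 1).choose p.2 := by
            rw [hpeel, mul_sum]
            congr 1
            refine sum_congr rfl fun p _ => ?_
            rw [add_zero, choose_two_mul_add_two_succ]
            ring
        _ = catalan (n + 1) + (2 * n + 2).choose n + (2 * n + 2).choose n := by
            rw [ih 1]; ring
        _ = (2 * (n + 1) + 0 + 1).choose (n + 1) := by
            rw [catalan_succ_add_choose, show 2 * (n + 1) + 0 + 1 = 2 * n + 2 + 1 by ring,
              Nat.choose_succ_succ' (2 * n + 2) n, add_comm]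
    | succ r ihr =>
      have hpascal (m : ℕ) : (2 * m + 2 + (r + 1)).choose (m + 1)
          = (2 * m + (r + 2)).choose m + (2 * m + 2 + r).choose (m + 1) := by
        rw [show 2 * m + 2 + (r + 1) = 2 * m + (r + 2) + 1 by ring, Nat.choose_succ_succ',
          show 2 * m + (r + 2) = 2 * m + 2 + r by ring]
      calc ∑ p ∈ antidiagonal (n + 1), catalan p.1 * (2 * p.2 + (r + 1)).choose p.2
          = ∑ p ∈ antidiagonal n, catalan p.1 * (2 * p.2 + (r + 2)).choose p.2 +
              (catalan (n + 1) +
                ∑ p ∈ antidiagonal n, catalan p.1 * (2 * p.2 + 2 + r).choose (p.2 + 1)) := by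
            simp only [hpeel, hpascal, mul_add, sum_add_distrib]
            ring
        _ = (2 * n + (r + 2) + 1).choose n + (2 * (n + 1) + r + 1).choose (n + 1) := by
            rw [ih, ← hpeel, ihr]
        _ = (2 * (n + 1) + (r + 1) + 1).choose (n + 1) := by
            rw [show 2 * n + (r + 2) + 1 = 2 * (n + 1) + r + 1 by ring, ← Nat.choose_succ_succ']
            congr 1

theorem sum_antidiagonal_catalan_succ_mul_choose (n : ℕ) :
    ∑ p ∈ antidiagonal n, catalan (p.1 + 1) * (2 * p.2 + 1).choose p.2 =
      (2 * n + 3).choose n := by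
  have h := sum_antidiagonal_catalan_mul_choose (n + 1) 1
  rw [Nat.sum_antidiagonal_succ, Nat.choose_succ_succ' (2 * (n + 1) + 1) n,
    show 2 * (n + 1) + 1 = 2 * n + 3 by ring] at h
  simp only [catalan_zero, one_mul] at h
  omega

-- Truncated subtraction makes `(2 * 0 - 1).choose 0 = 1`, so `m ↦ (2 * m - 1).choose m` also
-- agrees with `genCompAll b 0 = 1` at `m = 0`.
theorem choose_two_mul_sub_one_succ_eq_sum (n : ℕ) :
    (2 * (n + 1) - 1).choose (n + 1)
      = ∑ p ∈ antidiagonal n, catalan (p.1 + 1) * (2 * p.2 - 1).choose p.2 := by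
  cases n with
  | zero => simp
  | succ n =>
    have hsymm (m : ℕ) : (2 * (m + 1) - 1).choose (m + 1) = (2 * m + 1).choose m := by
      rw [show 2 * (m + 1) - 1 = 2 * m + 1 by omega, Nat.choose_symm_half]
    rw [Nat.sum_antidiagonal_succ']
    simp only [hsymm, sum_antidiagonal_catalan_succ_mul_choose, mul_zero, Nat.zero_sub,
      Nat.choose_zero_right, mul_one]
    exact (catalan_succ_succ_add_choose n).symm

theorem genCompAll_catalan_general (b : ℕ → ℕ) (hb : ∀ i, 1 ≤ i → b i = catalan i)
    (n : ℕ) :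
    genCompAll b n = Nat.choose (2 * n - 1) n := by
  induction n using Nat.strong_induction_on with
  | _ n ih =>
    cases n with
    | zero => simp [genCompAll_zero]
    | succ n =>
      rw [genCompAll_succ, choose_two_mul_sub_one_succ_eq_sum]
      refine sum_congr rfl fun p hp => ?_
      have hp : p.1 + p.2 = n := HasAntidiagonal.mem_antidiagonal.1 hp
      rw [hb _ (Nat.le_add_left 1 p.1), ih p.2 (by omega)]

theorem genCompAll_catalan (b : ℕ → ℕ) (hb : ∀ i, 1 ≤ i → b i = catalan i)
    (n : ℕ) (hn : 1 ≤ n) :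
    genCompAll b n = Nat.choose (2 * n - 1) n :=
  genCompAll_catalan_general b hb n
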